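/- arXiv:1012.5447 — 2 statements merged into one kernel-verified Lean document; each statement's English description precedes it below -/
import Mathlib

section
/- A non-increasing sequence of integers B = [b_1, b_2, ..., b_n] is the imbalance sequence of some r-digraph if and only if for every k with 1 ≤ k ≤ n, the partial sum b_1 + ... + b_k ≤ r·k·(n−k), with equality when k = n. -/
/-!
An `r`-digraph with imbalances `b` amounts to an antisymmetric integer matrix `M` with
`M i j ≤ r` off the diagonal and row sums `b` (take `A i j = max (M i j) 0`), i.e. a feasible flow
for the capacity `r` on every ordered pair. By Gale's feasibility theorem such a flow exists iff
`∑ b = 0` and `∑_{i ∈ S} b i ≤ cut S = r |S| (n - |S|)` for every set `S`; for non-increasing `b`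
the largest sum over a set of given size is a partial sum, which gives the stated conditions.

Gale's theorem is proved by induction on the total capacity. Take `p` with `b p > 0` and the
largest tight set `T ∌ p` (tight sets are closed under union because the cut is submodular).
Tightness of `T` forces an arc `p → q` of positive capacity leaving `T`; routing one unit along it
and removing that capacity preserves all cut conditions, since any set containing `q` but not `p`
is not tight.
-/

open Finset

/-- An `r`-digraph on `n` vertices: `A i j` is the number of arcs from `i` to `j`;
no loops, and at most `r` arcs (both directions counted) between any two distinct vertices. -/
def IsRDigraph (n r : ℕ) (A : Fin n → Fin n → ℕ) : Prop :=
  (∀ i, A i i = 0) ∧ ∀ i j, i ≠ j → A i j + A j i ≤ r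

/-- Imbalance of a vertex: outdegree minus indegree. -/
def imbalance {n : ℕ} (A : Fin n → Fin n → ℕ) (v : Fin n) : ℤ :=
  (∑ j, (A v j : ℤ)) - ∑ j, (A j v : ℤ)

/-- `b` lists the vertex imbalances of `A` (in some order given by a permutation). -/
def IsImbalanceSeq (n r : ℕ) (A : Fin n → Fin n → ℕ) (b : Fin n → ℤ) : Prop :=
  IsRDigraph n r A ∧ ∃ σ : Equiv.Perm (Fin n), ∀ i, b i = imbalance A (σ i)

/-- Sum of the first `k` entries of `b`. -/
def psum {n : ℕ} (b : Fin n → ℤ) (k : ℕ) : ℤ :=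
  ∑ i ∈ Finset.univ.filter (fun i : Fin n => (i : ℕ) < k), b i

lemma sum_le_sum_of_card_eq {α M : Type*} [AddCommMonoid M] [LinearOrder M] [IsOrderedAddMonoid M]
    {s t : Finset α} {f : α → M} (hst : #s = #t) (h : ∀ i ∈ s, ∀ j ∈ t, f i ≤ f j) :
    ∑ i ∈ s, f i ≤ ∑ j ∈ t, f j := by
  rcases t.eq_empty_or_nonempty with rfl | ht
  · simp_all
  calc ∑ i ∈ s, f i ≤ #s • t.inf' ht f :=
        sum_le_card_nsmul _ _ _ fun i hi => le_inf' ht f fun j hj => h i hi j hj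
    _ = #t • t.inf' ht f := by rw [hst]
    _ ≤ ∑ j ∈ t, f j := card_nsmul_le_sum _ _ _ fun j hj => inf'_le f hj

section FeasibleFlow

variable {ι : Type*} [Fintype ι]

/-- `M i j` is the net flow from `i` to `j`, and `b i` the net amount leaving `i`. -/
def IsFeasibleFlow (c : ι → ι → ℕ) (b : ι → ℤ) (M : ι → ι → ℤ) : Prop :=
  (∀ i j, M j i = -M i j) ∧ (∀ i j, M i j ≤ c i j) ∧ ∀ i, ∑ j, M i j = b i

lemma isFeasibleFlow_zero (c : ι → ι → ℕ) : IsFeasibleFlow c 0 0 :=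
  ⟨fun _ _ => by simp, fun _ _ => by simp, fun _ => by simp⟩

lemma IsFeasibleFlow.add {c d : ι → ι → ℕ} {b b' : ι → ℤ} {M N : ι → ι → ℤ}
    (hM : IsFeasibleFlow c b M) (hN : IsFeasibleFlow d b' N) :
    IsFeasibleFlow (c + d) (b + b') (M + N) := by
  refine ⟨fun i j => ?_, fun i j => ?_, fun i => ?_⟩
  · simp only [Pi.add_apply, hM.1 i j, hN.1 i j]; ring
  · push_cast [Pi.add_apply]; linarith [hM.2.1 i j, hN.2.1 i j]
  · simp [sum_add_distrib, hM.2.2, hN.2.2]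

variable [DecidableEq ι]

def cut (c : ι → ι → ℕ) (S : Finset ι) : ℤ :=
  ∑ i ∈ S, ∑ j ∈ Sᶜ, (c i j : ℤ)

lemma sum_sum_eq_sum_sum_compl_of_antisymm {M : ι → ι → ℤ} (hM : ∀ i j, M j i = -M i j)
    (S : Finset ι) : ∑ i ∈ S, ∑ j, M i j = ∑ i ∈ S, ∑ j ∈ Sᶜ, M i j := by
  have hinner : ∑ i ∈ S, ∑ j ∈ S, M i j = 0 := by
    have h : ∑ i ∈ S, ∑ j ∈ S, M i j = ∑ i ∈ S, ∑ j ∈ S, -M i j := by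
      rw [sum_comm]
      exact sum_congr rfl fun i _ => sum_congr rfl fun j _ => hM i j
    simp only [sum_neg_distrib] at h
    omega
  simp only [← sum_add_sum_compl S, sum_add_distrib, hinner, zero_add]

namespace IsFeasibleFlow

variable {c : ι → ι → ℕ} {b : ι → ℤ} {M : ι → ι → ℤ}

lemma sum_le_cut (hM : IsFeasibleFlow c b M) (S : Finset ι) : ∑ i ∈ S, b i ≤ cut c S := by
  simp only [← hM.2.2, sum_sum_eq_sum_sum_compl_of_antisymm hM.1, cut]
  exact sum_le_sum fun i _ => sum_le_sum fun j _ => hM.2.1 i j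

lemma sum_eq_zero (hM : IsFeasibleFlow c b M) : ∑ i, b i = 0 := by
  simp [← hM.2.2, sum_sum_eq_sum_sum_compl_of_antisymm hM.1]

end IsFeasibleFlow

lemma isFeasibleFlow_single (p q : ι) :
    IsFeasibleFlow (Pi.single p (Pi.single q 1)) (Pi.single p 1 - Pi.single q 1)
      (Pi.single p (Pi.single q 1) - Pi.single q (Pi.single p 1)) := by
  refine ⟨fun i j => ?_, fun i j => ?_, fun i => ?_⟩
  · simp only [Pi.sub_apply, Pi.single_apply, ite_apply, Pi.zero_apply]; split_ifs <;> simp_all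
  · simp only [Pi.sub_apply, Pi.single_apply, ite_apply, Pi.zero_apply]; split_ifs <;> simp_all
  · simp only [Pi.sub_apply, Pi.single_apply, ite_apply, Pi.zero_apply, sum_sub_distrib]
    split_ifs <;> simp_all

lemma cut_add (c d : ι → ι → ℕ) (S : Finset ι) : cut (c + d) S = cut c S + cut d S := by
  simp [cut, sum_add_distrib]

lemma cut_single (p q : ι) (S : Finset ι) :
    cut (Pi.single p (Pi.single q 1)) S = if p ∈ S ∧ q ∉ S then 1 else 0 := by
  simp only [cut, Pi.single_apply, ite_apply, Pi.zero_apply, Nat.cast_ite, Nat.cast_one,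
    Nat.cast_zero]
  split_ifs <;> simp_all

lemma cut_eq_sum_ite (c : ι → ι → ℕ) (S : Finset ι) :
    cut c S = ∑ i, ∑ j, if i ∈ S ∧ j ∈ Sᶜ then (c i j : ℤ) else 0 := by
  rw [cut, ← sum_product', ← sum_product', ← sum_filter]
  congr 1
  ext ⟨i, j⟩
  simp

lemma cut_union_add_cut_inter_le (c : ι → ι → ℕ) (S S' : Finset ι) :
    cut c (S ∪ S') + cut c (S ∩ S') ≤ cut c S + cut c S' := by
  simp only [cut_eq_sum_ite, ← sum_add_distrib]
  refine sum_le_sum fun i _ => sum_le_sum fun j _ => ?_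
  simp only [mem_compl, mem_union, mem_inter]
  split_ifs <;> simp_all

lemma cut_insert_le {c : ι → ι → ℕ} {p : ι} {T : Finset ι} (hpT : p ∉ T)
    (hp : ∀ j ∉ T, c p j = 0) : cut c (insert p T) ≤ cut c T := by
  have hout : ∑ j ∈ (insert p T)ᶜ, (c p j : ℤ) = 0 :=
    sum_eq_zero fun j hj => by simp [hp j (by simp_all)]
  rw [cut, sum_insert hpT, hout, zero_add, cut]
  exact sum_le_sum fun i _ => sum_le_sum_of_subset_of_nonneg
    (compl_subset_compl.2 (subset_insert p T)) fun _ _ _ => by positivity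

-- A set `S` is tight if `∑ i ∈ S, b i = cut c S`.
section Tight

variable {c : ι → ι → ℕ} {b : ι → ℤ} (hcut : ∀ S, ∑ i ∈ S, b i ≤ cut c S)
include hcut

lemma sum_union_eq_cut {S S' : Finset ι} (hS : ∑ i ∈ S, b i = cut c S)
    (hS' : ∑ i ∈ S', b i = cut c S') : ∑ i ∈ S ∪ S', b i = cut c (S ∪ S') := by
  have := cut_union_add_cut_inter_le c S S'
  have := hcut (S ∪ S')
  have := hcut (S ∩ S')
  have := sum_union_inter (s₁ := S) (s₂ := S') (f := b)
  linarith

lemma exists_max_tight (p : ι) : ∃ T, p ∉ T ∧ ∑ i ∈ T, b i = cut c T ∧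
    ∀ S, p ∉ S → ∑ i ∈ S, b i = cut c S → S ⊆ T := by
  let tight := univ.filter fun S : Finset ι => p ∉ S ∧ ∑ i ∈ S, b i = cut c S
  have hT : p ∉ tight.sup id ∧ ∑ i ∈ tight.sup id, b i = cut c (tight.sup id) :=
    sup_induction (p := fun T => p ∉ T ∧ ∑ i ∈ T, b i = cut c T) ⟨by simp, by simp [cut]⟩
      (fun S hS S' hS' => ⟨by simp [hS.1, hS'.1], sum_union_eq_cut hcut hS.2 hS'.2⟩)
      fun S hS => (mem_filter.1 hS).2
  exact ⟨_, hT.1, hT.2, fun S hpS hS => le_sup (f := id) (by simp [tight, hpS, hS])⟩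

lemma exists_pos_capacity_of_tight {p : ι} (hp : 0 < b p) {T : Finset ι} (hpT : p ∉ T)
    (hT : ∑ i ∈ T, b i = cut c T) : ∃ q ∉ T, 0 < c p q := by
  by_contra! h
  have := hcut (insert p T)
  have := cut_insert_le hpT fun j hj => Nat.le_zero.1 (h j hj)
  rw [sum_insert hpT] at *
  linarith

end Tight

lemma sum_sub_single_add_single_le_cut {c : ι → ι → ℕ} {b : ι → ℤ} {p q : ι}
    (hcut : ∀ S, ∑ i ∈ S, b i ≤ cut (c + Pi.single p (Pi.single q 1)) S)
    (hstrict : ∀ S, p ∉ S → q ∈ S → ∑ i ∈ S, b i < cut (c + Pi.single p (Pi.single q 1)) S)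
    (S : Finset ι) : ∑ i ∈ S, (b - Pi.single p 1 + Pi.single q 1 : ι → ℤ) i ≤ cut c S := by
  have h := hcut S
  have hs := hstrict S
  rw [cut_add, cut_single] at h hs
  simp only [Pi.add_apply, Pi.sub_apply, sum_add_distrib, sum_sub_distrib, sum_pi_single']
  split_ifs at * <;> simp_all

theorem exists_isFeasibleFlow_of_sum_le_cut (c : ι → ι → ℕ) (b : ι → ℤ) (hb : ∑ i, b i = 0)
    (hcut : ∀ S, ∑ i ∈ S, b i ≤ cut c S) : ∃ M, IsFeasibleFlow c b M := by
  induction hN : ∑ i, ∑ j, c i j using Nat.strong_induction_on generalizing c b with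
  | _ N ih =>
  rcases eq_or_ne b 0 with rfl | hb0
  · exact ⟨0, isFeasibleFlow_zero c⟩
  obtain ⟨p, -, hp⟩ := exists_pos_of_sum_zero_of_exists_nonzero b hb
    (by simpa [funext_iff] using hb0)
  obtain ⟨T, hpT, hT, hTmax⟩ := exists_max_tight hcut p
  obtain ⟨q, hqT, hpq⟩ := exists_pos_capacity_of_tight hcut hp hpT hT
  have hle : Pi.single p (Pi.single q 1) ≤ c := by
    intro i j
    simp only [Pi.single_apply, ite_apply, Pi.zero_apply]
    split_ifs <;> simp_all [Nat.one_le_iff_ne_zero, Nat.pos_iff_ne_zero]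
  obtain ⟨c', rfl⟩ : ∃ c', c = c' + Pi.single p (Pi.single q 1) :=
    ⟨c - Pi.single p (Pi.single q 1), (tsub_add_cancel_of_le hle).symm⟩
  have hstrict S (hpS : p ∉ S) (hqS : q ∈ S) : ∑ i ∈ S, b i < cut _ S :=
    (hcut S).lt_of_ne fun h => hqT (hTmax S hpS h hqS)
  obtain ⟨M, hM⟩ := ih _ (by simp [← hN, sum_add_distrib, Pi.single_apply, ite_apply]) c'
    (b - Pi.single p 1 + Pi.single q 1) (by simp [sum_add_distrib, sum_sub_distrib, hb])
    (sum_sub_single_add_single_le_cut hcut hstrict) rfl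
  exact ⟨_, by convert hM.add (isFeasibleFlow_single p q) using 1; abel⟩

theorem exists_isFeasibleFlow_iff (c : ι → ι → ℕ) (b : ι → ℤ) :
    (∃ M, IsFeasibleFlow c b M) ↔ ∑ i, b i = 0 ∧ ∀ S, ∑ i ∈ S, b i ≤ cut c S :=
  ⟨fun ⟨_, hM⟩ => ⟨hM.sum_eq_zero, hM.sum_le_cut⟩,
    fun ⟨hb, hcut⟩ => exists_isFeasibleFlow_of_sum_le_cut c b hb hcut⟩

def completeCapacity (r : ℕ) : ι → ι → ℕ :=
  fun i j => if i = j then 0 else r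

lemma cut_completeCapacity (r : ℕ) (S : Finset ι) :
    cut (completeCapacity r) S = r * #S * (Fintype.card ι - #S) := by
  have h : ∀ i ∈ S, ∑ j ∈ Sᶜ, (completeCapacity r i j : ℤ) = ∑ j ∈ Sᶜ, (r : ℤ) :=
    fun i hi => sum_congr rfl fun j hj => by
      rw [completeCapacity, if_neg (by rintro rfl; exact mem_compl.1 hj hi)]
  rw [cut, sum_congr rfl h]
  simp [card_compl, Nat.cast_sub (card_le_univ S)]
  ring

end FeasibleFlow

section Digraph

variable {n : ℕ}

lemma card_filter_val_lt_of_le {k : ℕ} (hk : k ≤ n) : #{i : Fin n | i < k} = k := by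
  simp [Fin.card_filter_val_lt, hk]

lemma psum_self (b : Fin n → ℤ) : psum b n = ∑ i, b i := by
  simp [psum]

lemma sum_le_psum_card {b : Fin n → ℤ} (hb : Antitone b) (S : Finset (Fin n)) :
    ∑ i ∈ S, b i ≤ psum b #S := by
  set F : Finset (Fin n) := {i | i < #S}
  have hF : #F = #S := card_filter_val_lt_of_le (by simpa using card_le_univ S)
  calc ∑ i ∈ S, b i = ∑ i ∈ S ∩ F, b i + ∑ i ∈ S \ F, b i := (sum_inter_add_sum_sdiff ..).symm
    _ ≤ ∑ i ∈ F ∩ S, b i + ∑ i ∈ F \ S, b i := by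
      rw [inter_comm]
      gcongr 1
      refine sum_le_sum_of_card_eq (card_sdiff_comm hF.symm) fun i hi j hj => hb ?_
      simp only [F, mem_sdiff, mem_filter, mem_univ, true_and] at hi hj
      exact Fin.le_def.2 (by omega)
    _ = psum b #S := sum_inter_add_sum_sdiff ..

lemma forall_sum_le_iff_forall_psum_le {b : Fin n → ℤ} (hb : Antitone b) (f : ℕ → ℤ) :
    (∀ S : Finset (Fin n), ∑ i ∈ S, b i ≤ f #S) ↔ ∀ k ≤ n, psum b k ≤ f k := by
  refine ⟨fun h k hk => ?_, fun h S => (sum_le_psum_card hb S).trans (h _ ?_)⟩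
  · simpa [psum, card_filter_val_lt_of_le hk] using h {i | i < k}
  · simpa using card_le_univ S

lemma exists_imbalanceSeq_iff_exists_isFeasibleFlow (r : ℕ) (b : Fin n → ℤ) :
    (∃ A, IsImbalanceSeq n r A b) ↔ ∃ M, IsFeasibleFlow (completeCapacity r) b M := by
  constructor
  · rintro ⟨A, hA, σ, hσ⟩
    refine ⟨fun i j => A (σ i) (σ j) - A (σ j) (σ i), fun i j => by ring, fun i j => ?_,
      fun i => ?_⟩
    · rcases eq_or_ne i j with rfl | hij
      · simp [completeCapacity]
      have := hA.2 _ _ (σ.injective.ne hij)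
      simp only [completeCapacity, if_neg hij]
      omega
    · rw [hσ i, imbalance, sum_sub_distrib, Equiv.sum_comp σ (fun j => (A (σ i) j : ℤ)),
        Equiv.sum_comp σ (fun j => (A j (σ i) : ℤ))]
  · rintro ⟨M, hM, hle, hrow⟩
    refine ⟨fun i j => (M i j).toNat, ⟨fun i => ?_, fun i j hij => ?_⟩, Equiv.refl _, fun i => ?_⟩
    · have := hM i i
      dsimp only
      omega
    · have h1 := hle i j
      have h2 := hle j i
      have := hM i j
      simp only [completeCapacity, if_neg hij, if_neg (Ne.symm hij)] at h1 h2
      dsimp only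
      omega
    · simp only [imbalance, Equiv.refl_apply, ← sum_sub_distrib, hM i, Int.toNat_sub_toNat_neg,
        hrow]

end Digraph

theorem stmt1_general (n r : ℕ) (b : Fin n → ℤ) (hanti : Antitone b) :
    (∃ A : Fin n → Fin n → ℕ, IsImbalanceSeq n r A b) ↔
      ((∀ k : ℕ, 1 ≤ k → k ≤ n → psum b k ≤ (r : ℤ) * k * ((n : ℤ) - k)) ∧
        psum b n = (r : ℤ) * n * ((n : ℤ) - n)) := by
  rw [exists_imbalanceSeq_iff_exists_isFeasibleFlow, exists_isFeasibleFlow_iff]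
  simp only [cut_completeCapacity, Fintype.card_fin]
  rw [forall_sum_le_iff_forall_psum_le hanti (fun k => r * k * (n - k)), psum_self, sub_self,
    mul_zero]
  refine ⟨fun ⟨hsum, h⟩ => ⟨fun k _ hk => h k hk, hsum⟩, fun ⟨h, hsum⟩ => ⟨hsum, fun k hk => ?_⟩⟩
  rcases k.eq_zero_or_pos with rfl | hk0
  · simp [psum]
  · exact h k hk0 hk

/-- A non-increasing integer sequence is the imbalance sequence of some r-digraph iff
every partial sum satisfies $\sum_{i=1}^k b_i \le rk(n-k)$, with equality at $k=n$. -/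
theorem stmt1 (n r : ℕ) (hn : 1 ≤ n) (hr : 1 ≤ r) (b : Fin n → ℤ) (hanti : Antitone b) :
    (∃ A : Fin n → Fin n → ℕ, IsImbalanceSeq n r A b) ↔
      ((∀ k : ℕ, 1 ≤ k → k ≤ n → psum b k ≤ (r : ℤ) * k * ((n : ℤ) - k)) ∧
        psum b n = (r : ℤ) * n * ((n : ℤ) - n)) :=
  stmt1_general n r b hanti
end

section
/- Let b_1 ≥ b_2 ≥ ... ≥ b_n be integers satisfying b_1 + ... + b_k ≤ r·k·(n−k) for all 1 ≤ k ≤ n with equality at k = n. Then for every 1 ≤ k ≤ n, ∑_{i=1}^k b_i² ≤ ∑_{i=1}^k (2rn − 2rk − b_i)². -/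
open Finset

/-! With `c = 2r(n - k) ≥ 0`, expanding gives
`∑_{i ≤ k} (c - b_i)² - ∑_{i ≤ k} b_i² = c (k c - 2 ∑_{i ≤ k} b_i)`,
and the partial-sum bound `∑_{i ≤ k} b_i ≤ r k (n - k) = k c / 2` makes the right side nonnegative. -/

theorem Finset.sum_sq_le_sum_sub_sq {ι R : Type*} [CommRing R] [LinearOrder R]
    [IsStrictOrderedRing R] (s : Finset ι) (b : ι → R) {c : R} (hc : 0 ≤ c)
    (hsum : 2 * ∑ i ∈ s, b i ≤ #s * c) :
    ∑ i ∈ s, b i ^ 2 ≤ ∑ i ∈ s, (c - b i) ^ 2 := by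
  have hdiff : ∑ i ∈ s, (c - b i) ^ 2 - ∑ i ∈ s, b i ^ 2 = c * (#s * c - 2 * ∑ i ∈ s, b i) := by
    calc ∑ i ∈ s, (c - b i) ^ 2 - ∑ i ∈ s, b i ^ 2
        = ∑ i ∈ s, (c * c - c * (2 * b i)) := by
          rw [← sum_sub_distrib]
          exact sum_congr rfl fun i _ => by ring
      _ = c * (#s * c - 2 * ∑ i ∈ s, b i) := by
          rw [sum_sub_distrib, sum_const, nsmul_eq_mul, ← mul_sum, ← mul_sum]
          ring
  rw [← sub_nonneg, hdiff]
  exact mul_nonneg hc (sub_nonneg.2 hsum)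

theorem stmt5_general (n r : ℕ) (b : Fin n → ℤ)
    (hineq : ∀ k : ℕ, 1 ≤ k → k ≤ n → psum b k ≤ (r : ℤ) * k * ((n : ℤ) - k)) :
    ∀ k : ℕ, 1 ≤ k → k ≤ n →
      (∑ i ∈ Finset.univ.filter (fun i : Fin n => (i : ℕ) < k), (b i) ^ 2) ≤
        ∑ i ∈ Finset.univ.filter (fun i : Fin n => (i : ℕ) < k),
          (2 * (r : ℤ) * n - 2 * (r : ℤ) * k - b i) ^ 2 := by
  intro k hk hkn
  have hcard : #{i : Fin n | (i : ℕ) < k} = k := by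
    rw [Fin.card_filter_val_lt, min_eq_right hkn]
  refine sum_sq_le_sum_sub_sq _ b ?_ ?_
  · have hkn' : (k : ℤ) ≤ n := by exact_mod_cast hkn
    nlinarith
  · have hpsum := hineq k hk hkn
    rw [psum] at hpsum
    rw [hcard]
    linarith

/-- Arithmetic version: from the partial-sum upper bounds $\sum_{i=1}^k b_i \le rk(n-k)$
(with equality at k = n) follows the sum-of-squares inequality. -/
theorem stmt5 (n r : ℕ) (hn : 1 ≤ n) (hr : 1 ≤ r) (b : Fin n → ℤ) (hanti : Antitone b)
    (hineq : ∀ k : ℕ, 1 ≤ k → k ≤ n → psum b k ≤ (r : ℤ) * k * ((n : ℤ) - k))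
    (heqn : psum b n = (r : ℤ) * n * ((n : ℤ) - n)) :
    ∀ k : ℕ, 1 ≤ k → k ≤ n →
      (∑ i ∈ Finset.univ.filter (fun i : Fin n => (i : ℕ) < k), (b i) ^ 2) ≤
        ∑ i ∈ Finset.univ.filter (fun i : Fin n => (i : ℕ) < k),
          (2 * (r : ℤ) * n - 2 * (r : ℤ) * k - b i) ^ 2 :=
  stmt5_general n r b hineq
end
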